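/- arXiv:2405.17186 — 2 statements merged into one kernel-verified Lean document; each statement's English description precedes it below -/
import Mathlib

section
/- Let T > 0, τ ∈ (0, T), A > 0, α > 0 and B > 0. Suppose y : [0, T) → [0, ∞) is differentiable and satisfies y'(t) + A·(y(t))^α ≤ h(t) for all t ∈ (0, T), where h : [0, T) → [0, ∞) is locally integrable and satisfies ∫_{t−τ}^{t} h(s) ds ≤ B for all t ∈ (τ, T). Then y(t) ≤ max { y(0) + B, τ^(−1/α)·(B/A)^(1/α) + 2B } for all t ∈ (τ, T). -/
open MeasureTheory Set

/-! Put `K = (B / (A τ)) ^ (1 / α)`, so that `A * K ^ α = B / τ`. On a window of length `τ`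
where `y > K`, the dissipation `A * y ^ α` absorbs the whole forcing `∫ h ≤ B` of the window,
so `y t ≤ y (t - τ)`. Otherwise `y ≤ K` somewhere in the window and `y` gains at most `B`
afterwards. Stepping back by `τ` reduces every time to the first window, where
`y ≤ y 0 + B` by continuity of `y` at `0`. -/

theorem sub_le_setIntegral_Ioo_of_deriv_le {f φ : ℝ → ℝ} {a b : ℝ} (hab : a ≤ b)
    (hf : ∀ x ∈ Icc a b, DifferentiableAt ℝ f x) (hφ : IntegrableOn φ (Icc a b))
    (hle : ∀ x ∈ Ioo a b, deriv f x ≤ φ x) :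
    f b - f a ≤ ∫ u in Ioo a b, φ u := by
  have hcont : ContinuousOn f (Icc a b) := fun x hx => (hf x hx).continuousAt.continuousWithinAt
  have hderiv : ∀ x ∈ Ioo a b, HasDerivWithinAt f (deriv f x) (Ioi x) x :=
    fun x hx => (hf x (Ioo_subset_Icc_self hx)).hasDerivAt.hasDerivWithinAt
  have := intervalIntegral.sub_le_integral_of_hasDeriv_right_of_le hab hcont hderiv hφ hle
  rwa [intervalIntegral.integral_of_le hab, integral_Ioc_eq_integral_Ioo] at this

theorem sub_le_setIntegral_Ioo_sub_of_deriv_le {f φ : ℝ → ℝ} {a b c : ℝ} (hab : a ≤ b)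
    (hf : ∀ x ∈ Icc a b, DifferentiableAt ℝ f x) (hφ : IntegrableOn φ (Icc a b))
    (hle : ∀ x ∈ Ioo a b, deriv f x ≤ φ x - c) :
    f b - f a ≤ (∫ u in Ioo a b, φ u) - c * (b - a) := by
  have hφc : IntegrableOn (fun u => φ u - c) (Icc a b) :=
    hφ.sub (integrableOn_const measure_Icc_lt_top.ne)
  have := sub_le_setIntegral_Ioo_of_deriv_le hab hf hφc hle
  rwa [integral_sub (hφ.mono_set Ioo_subset_Icc_self) (integrableOn_const measure_Ioo_lt_top.ne),
    setIntegral_const, Real.volume_real_Ioo_of_le hab, smul_eq_mul, mul_comm] at this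

theorem setIntegral_Ioo_le_of_forall_window {h : ℝ → ℝ} {τ T B a b : ℝ} (hτT : τ < T)
    (hh_nonneg : ∀ x, 0 ≤ x → x < T → 0 ≤ h x) (hh_int : LocallyIntegrableOn h (Ico 0 T))
    (hh_bound : ∀ t, τ < t → t < T → ∫ s in Ioo (t - τ) t, h s ≤ B)
    (ha : 0 < a) (hb : b < T) (hba : b ≤ a + τ) :
    ∫ u in Ioo a b, h u ≤ B := by
  -- any window end `t ∈ (τ, T)` with `b ≤ t ≤ a + τ` does the job
  set t := max b (min (a + τ) ((τ + T) / 2))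
  have hτt : τ < t := lt_max_of_lt_right (lt_min (by linarith) (by linarith))
  have htT : t < T := max_lt hb ((min_le_right _ _).trans_lt (by linarith))
  have hta : t ≤ a + τ := max_le hba (min_le_left _ _)
  have hwindow : IntegrableOn h (Ioo (t - τ) t) :=
    hh_int.integrableOn_compact_subset (Icc_subset_Ico (by linarith) htT) isCompact_Icc
      |>.mono_set Ioo_subset_Icc_self
  calc ∫ u in Ioo a b, h u ≤ ∫ u in Ioo (t - τ) t, h u := by
        refine setIntegral_mono_set hwindow ?_
          (.of_forall (Ioo_subset_Ioo (by linarith) (le_max_left _ _)))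
        filter_upwards [ae_restrict_mem measurableSet_Ioo] with x hx
        exact hh_nonneg x (by linarith [hx.1]) (hx.2.trans htT)
    _ ≤ B := hh_bound t hτt htT

theorem le_add_of_deriv_le_of_forall_window {y h : ℝ → ℝ} {τ T B a b : ℝ} (hτT : τ < T)
    (hy_diff : ∀ t, 0 ≤ t → t < T → DifferentiableAt ℝ y t)
    (hh_nonneg : ∀ x, 0 ≤ x → x < T → 0 ≤ h x) (hh_int : LocallyIntegrableOn h (Ico 0 T))
    (hderiv : ∀ x, 0 < x → x < T → deriv y x ≤ h x)
    (hh_bound : ∀ t, τ < t → t < T → ∫ s in Ioo (t - τ) t, h s ≤ B)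
    (ha : 0 < a) (hab : a ≤ b) (hb : b < T) (hba : b ≤ a + τ) :
    y b ≤ y a + B := by
  have hgain := sub_le_setIntegral_Ioo_of_deriv_le hab
    (fun x hx => hy_diff x (ha.le.trans hx.1) (hx.2.trans_lt hb))
    (hh_int.integrableOn_compact_subset (Icc_subset_Ico ha.le hb) isCompact_Icc)
    (fun x hx => hderiv x (ha.trans hx.1) (hx.2.trans hb))
  linarith [setIntegral_Ioo_le_of_forall_window hτT hh_nonneg hh_int hh_bound ha hb hba]

theorem le_sub_of_forall_window_lt {y h : ℝ → ℝ} {τ T A α B K t : ℝ} (hτ : 0 < τ)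
    (hA : 0 ≤ A) (hα : 0 ≤ α) (hK : 0 ≤ K) (hAK : A * K ^ α = B / τ)
    (hy_diff : ∀ t, 0 ≤ t → t < T → DifferentiableAt ℝ y t)
    (hh_int : LocallyIntegrableOn h (Ico 0 T))
    (hy_ode : ∀ t, 0 < t → t < T → deriv y t + A * y t ^ α ≤ h t)
    (hτt : τ < t) (htT : t < T) (hh_bound : ∫ s in Ioo (t - τ) t, h s ≤ B)
    (hlow : ∀ s ∈ Ioo (t - τ) t, K < y s) :
    y t ≤ y (t - τ) := by
  have hdrop := sub_le_setIntegral_Ioo_sub_of_deriv_le (c := B / τ) (by linarith : t - τ ≤ t)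
    (fun x hx => hy_diff x (by linarith [hx.1]) (hx.2.trans_lt htT))
    (hh_int.integrableOn_compact_subset (Icc_subset_Ico (by linarith) htT) isCompact_Icc)
    fun x hx => by
      have hKy : A * K ^ α ≤ A * y x ^ α := by gcongr; exact (hlow x hx).le
      linarith [hy_ode x (by linarith [hx.1]) (hx.2.trans htT)]
  have hτB : B / τ * (t - (t - τ)) = B := by field_simp; ring
  linarith

theorem le_of_continuousAt_of_forall_Ioo_le {f : ℝ → ℝ} {a b c : ℝ} (hf : ContinuousAt f a)
    (hab : a < b) (hle : ∀ x ∈ Ioo a b, c ≤ f x) : c ≤ f a :=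
  haveI : (nhdsWithin a (Ioo a b)).NeBot := left_nhdsWithin_Ioo_neBot hab
  ge_of_tendsto (hf.tendsto.mono_left nhdsWithin_le_nhds)
    (Filter.eventually_iff_exists_mem.2 ⟨Ioo a b, self_mem_nhdsWithin, hle⟩)

theorem le_of_forall_le_or_le_sub {y : ℝ → ℝ} {τ T M : ℝ} (hτ : 0 < τ)
    (hinit : ∀ t, 0 < t → t ≤ τ → y t ≤ M)
    (hstep : ∀ t, τ < t → t < T → y t ≤ M ∨ y t ≤ y (t - τ)) :
    ∀ t, 0 < t → t < T → y t ≤ M := by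
  have hn : ∀ n : ℕ, ∀ t, 0 < t → t < T → t ≤ (n + 1) * τ → y t ≤ M := by
    intro n
    induction n with
    | zero => intro t ht _ htn; exact hinit t ht (by simpa using htn)
    | succ n ih =>
      intro t ht htT htn
      rcases le_or_gt t τ with htτ | hτt
      · exact hinit t ht htτ
      · refine (hstep t hτt htT).elim id fun hback => hback.trans (ih (t - τ) ?_ ?_ ?_)
        all_goals push_cast at htn ⊢; linarith
  intro t ht htT
  obtain ⟨n, hn'⟩ := exists_nat_ge (t / τ)
  exact hn n t ht htT (by rw [div_le_iff₀ hτ] at hn'; nlinarith)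

theorem stmt_2_general (T τ A α B : ℝ) (hτ : τ ∈ Set.Ioo 0 T)
    (hA : 0 < A) (hα : 0 < α) (hB : 0 < B)
    (y h : ℝ → ℝ)
    (hy_nonneg : ∀ t : ℝ, 0 ≤ t → t < T → 0 ≤ y t)
    (hy_diff : ∀ t : ℝ, 0 ≤ t → t < T → DifferentiableAt ℝ y t)
    (hh_nonneg : ∀ t : ℝ, 0 ≤ t → t < T → 0 ≤ h t)
    (hh_int : LocallyIntegrableOn h (Set.Ico 0 T))
    (hy_ode : ∀ t : ℝ, 0 < t → t < T → deriv y t + A * (y t) ^ α ≤ h t)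
    (hh_bound : ∀ t : ℝ, τ < t → t < T → (∫ s in Set.Ioo (t - τ) t, h s) ≤ B) :
    ∀ t : ℝ, τ < t → t < T →
      y t ≤ max (y 0 + B) (τ ^ (-(1 / α)) * (B / A) ^ (1 / α) + 2 * B) := by
  obtain ⟨hτ0, hτT⟩ := hτ
  set K := τ ^ (-(1 / α)) * (B / A) ^ (1 / α)
  have hAK : A * K ^ α = B / τ := by
    rw [Real.mul_rpow (by positivity) (by positivity), ← Real.rpow_mul hτ0.le,
      ← Real.rpow_mul (by positivity), one_div, inv_mul_cancel₀ hα.ne', neg_mul,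
      inv_mul_cancel₀ hα.ne', Real.rpow_neg_one, Real.rpow_one]
    field_simp
  have hgain : ∀ a b, 0 < a → a ≤ b → b < T → b ≤ a + τ → y b ≤ y a + B :=
    fun a b => le_add_of_deriv_le_of_forall_window hτT hy_diff hh_nonneg hh_int
      (fun x hx hxT => by
        have : 0 ≤ A * y x ^ α := by have := hy_nonneg x hx.le hxT; positivity
        linarith [hy_ode x hx hxT])
      hh_bound
  have hinit : ∀ t, 0 < t → t ≤ τ → y t ≤ y 0 + B := fun t ht htτ =>
    sub_le_iff_le_add.1 <| le_of_continuousAt_of_forall_Ioo_le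
      (hy_diff 0 le_rfl (by linarith)).continuousAt ht
      fun s hs => sub_le_iff_le_add.2 <| hgain s t hs.1 hs.2.le (by linarith) (by linarith [hs.1])
  have hstep : ∀ t, τ < t → t < T → y t ≤ K + 2 * B ∨ y t ≤ y (t - τ) := by
    intro t hτt htT
    by_cases hlow : ∀ s ∈ Ioo (t - τ) t, K < y s
    · exact .inr <| le_sub_of_forall_window_lt hτ0 hA.le hα.le (by positivity) hAK hy_diff
        hh_int hy_ode hτt htT (hh_bound t hτt htT) hlow
    · push Not at hlow
      obtain ⟨s, hs, hsK⟩ := hlow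
      exact .inl <| by linarith [hgain s t (by linarith [hs.1]) hs.2.le htT (by linarith [hs.1])]
  intro t hτt htT
  exact le_of_forall_le_or_le_sub hτ0 (fun s hs hsτ => (hinit s hs hsτ).trans (le_max_left _ _))
    (fun s hτs hsT => (hstep s hτs hsT).imp_left (·.trans (le_max_right _ _)))
    t (by linarith) htT

/-- Uniform-Gronwall-type Lemma 2.4. -/
theorem stmt_2 (T τ A α B : ℝ) (hT : 0 < T) (hτ : τ ∈ Set.Ioo 0 T)
    (hA : 0 < A) (hα : 0 < α) (hB : 0 < B)
    (y h : ℝ → ℝ)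
    (hy_nonneg : ∀ t : ℝ, 0 ≤ t → t < T → 0 ≤ y t)
    (hy_diff : ∀ t : ℝ, 0 ≤ t → t < T → DifferentiableAt ℝ y t)
    (hh_nonneg : ∀ t : ℝ, 0 ≤ t → t < T → 0 ≤ h t)
    (hh_int : LocallyIntegrableOn h (Set.Ico 0 T))
    (hy_ode : ∀ t : ℝ, 0 < t → t < T → deriv y t + A * (y t) ^ α ≤ h t)
    (hh_bound : ∀ t : ℝ, τ < t → t < T → (∫ s in Set.Ioo (t - τ) t, h s) ≤ B) :
    ∀ t : ℝ, τ < t → t < T →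
      y t ≤ max (y 0 + B) (τ ^ (-(1 / α)) * (B / A) ^ (1 / α) + 2 * B) :=
  stmt_2_general T τ A α B hτ hA hα hB y h hy_nonneg hy_diff hh_nonneg hh_int hy_ode hh_bound
end

section
/- Let N ≥ 4 be an integer and let α be a real number with α > (4N − 4 + N·√(2N² − 6N + 8))/(2N). Then α > 2, and there exists a real number p₀ with 1 < p₀ < 2α/(N−2) − 2/N such that both N(α−1)/(Nα − 2N + 1) < (N + 2p₀)/(N + p₀) and (α−1)/(α−2) < 1 + 2p₀/N hold. -/
/-!
Writing `s = √(2N² - 6N + 8)`, the hypothesis says `N s < 2(Nα - 2N + 2)`; squaring it gives exactly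
`N²(N - 1)(N - 2) < 2(Nα - N + 2)(Nα - 3N + 2)`, i.e. `N(N - 1)/(Nα - 3N + 2) < 2α/(N - 2) - 2/N`.
After clearing denominators, both interval conditions say that `p₀` exceeds a bound which is at most
`N(N - 1)/(Nα - 3N + 2)`, so any `p₀` strictly between that number (or `1`) and `2α/(N - 2) - 2/N` works.
Since `s ≥ N` for `N ≥ 4`, the hypothesis also forces `α > N/2 + 2 - 2/N > 2`.
-/

noncomputable def alphaThreshold (n : ℝ) : ℝ := (4 * n - 4 + n * √(2 * n ^ 2 - 6 * n + 8)) / (2 * n)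

section

variable {n α p : ℝ}

lemma le_sqrt_two_mul_sq_sub (hn : 4 ≤ n) : n ≤ √(2 * n ^ 2 - 6 * n + 8) :=
  Real.le_sqrt_of_sq_le (by nlinarith)

lemma mul_sqrt_lt_of_alphaThreshold_lt (hn : 0 < n) (hα : alphaThreshold n < α) :
    n * √(2 * n ^ 2 - 6 * n + 8) < 2 * (n * α - 2 * n + 2) := by
  rw [alphaThreshold, div_lt_iff₀ (by positivity)] at hα
  linarith

lemma sq_lt_of_alphaThreshold_lt (hn : 4 ≤ n) (hα : alphaThreshold n < α) :
    n ^ 2 < 2 * (n * α - 2 * n + 2) :=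
  calc n ^ 2 = n * n := sq n
    _ ≤ n * √(2 * n ^ 2 - 6 * n + 8) := by gcongr; exact le_sqrt_two_mul_sq_sub hn
    _ < 2 * (n * α - 2 * n + 2) := mul_sqrt_lt_of_alphaThreshold_lt (by linarith) hα

lemma sq_mul_sub_one_mul_sub_two_lt_of_alphaThreshold_lt (hn : 3 ≤ n) (hα : alphaThreshold n < α) :
    n ^ 2 * (n - 1) * (n - 2) < 2 * (n * α - n + 2) * (n * α - 3 * n + 2) := by
  have hs := mul_sqrt_lt_of_alphaThreshold_lt (by linarith) hα
  have hsq : (n * √(2 * n ^ 2 - 6 * n + 8)) ^ 2 = n ^ 2 * (2 * n ^ 2 - 6 * n + 8) := by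
    rw [mul_pow, Real.sq_sqrt (by nlinarith)]
  have := pow_lt_pow_left₀ hs (by positivity) two_ne_zero
  nlinarith

lemma lt_sub_div_of_mul_lt_mul (hn : 2 < n) (ha : 0 < n * α - 3 * n + 2)
    (h : n ^ 2 * (n - 1) * (n - 2) < 2 * (n * α - n + 2) * (n * α - 3 * n + 2)) :
    n * (n - 1) / (n * α - 3 * n + 2) < 2 * α / (n - 2) - 2 / n := by
  have hn₀ : 0 < n := by linarith
  have hn₂ : 0 < n - 2 := by linarith
  rw [div_sub_div _ _ hn₂.ne' hn₀.ne', div_lt_div_iff₀ ha (by positivity)]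
  nlinarith

lemma theta_bounds_ordered (hn : 0 < n) (hd : 0 < n * α - 2 * n + 1) (hp : 0 < p)
    (h : n * (n - 1) < p * (n * α - 3 * n + 2)) :
    n * (α - 1) / (n * α - 2 * n + 1) < (n + 2 * p) / (n + p) := by
  rw [div_lt_div_iff₀ hd (by linarith)]
  nlinarith

lemma theta₁_bounds_ordered (hα : 2 < α) (hn : 0 < n) (h : n < 2 * p * (α - 2)) :
    (α - 1) / (α - 2) < 1 + 2 * p / n := by
  have hα₂ : 0 < α - 2 := by linarith
  have : (α - 1) / (α - 2) = 1 + 1 / (α - 2) := by field_simp; ring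
  rw [this, add_lt_add_iff_left, div_lt_div_iff₀ hα₂ hn]
  linarith

lemma lt_two_mul_mul_of_mul_lt (hn : 2 ≤ n) (hα : 2 < α) (hp : 0 < p)
    (h : n * (n - 1) < p * (n * α - 3 * n + 2)) : n < 2 * p * (α - 2) := by
  have : p * (n * α - 3 * n + 2) ≤ 2 * p * (α - 2) * (n - 1) := by
    nlinarith [mul_nonneg hp.le (mul_nonneg (sub_nonneg.2 hn) (sub_nonneg.2 hα.le))]
  exact lt_of_mul_lt_mul_right (by linarith) (by linarith : (0 : ℝ) ≤ n - 1)

end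

/-- Exponent-selection claim underlying the choices of the Hölder exponents
`θ` and `θ₁` in the proof of Lemma 3.3. -/
theorem stmt_13 (N : ℕ) (hN : 4 ≤ N) (α : ℝ)
    (hα : α > (4 * (N : ℝ) - 4 + N * Real.sqrt (2 * (N : ℝ) ^ 2 - 6 * N + 8)) / (2 * N)) :
    2 < α ∧
    ∃ p₀ : ℝ, 1 < p₀ ∧ p₀ < 2 * α / ((N : ℝ) - 2) - 2 / N ∧
      (N : ℝ) * (α - 1) / ((N : ℝ) * α - 2 * N + 1) < ((N : ℝ) + 2 * p₀) / ((N : ℝ) + p₀) ∧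
      (α - 1) / (α - 2) < 1 + 2 * p₀ / N := by
  have hn : (4 : ℝ) ≤ N := by exact_mod_cast hN
  set n : ℝ := (N : ℝ)
  have hsq := sq_lt_of_alphaThreshold_lt hn hα
  have hα₂ : 2 < α := by nlinarith
  have ha : 0 < n * α - 3 * n + 2 := by nlinarith
  have h1U : 1 < 2 * α / (n - 2) - 2 / n := by
    rw [div_sub_div _ _ (by linarith) (by linarith), lt_div_iff₀ (by nlinarith)]
    nlinarith
  have hcU := lt_sub_div_of_mul_lt_mul (by linarith) ha
    (sq_mul_sub_one_mul_sub_two_lt_of_alphaThreshold_lt (by linarith) hα)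
  obtain ⟨p, hp, hpU⟩ := exists_between (max_lt h1U hcU)
  have hp₁ : 1 < p := (le_max_left _ _).trans_lt hp
  have hpa : n * (n - 1) < p * (n * α - 3 * n + 2) :=
    (div_lt_iff₀ ha).mp ((le_max_right _ _).trans_lt hp)
  refine ⟨hα₂, p, hp₁, hpU, ?_, ?_⟩
  · exact theta_bounds_ordered (by linarith) (by linarith) (by linarith) hpa
  · exact theta₁_bounds_ordered hα₂ (by linarith)
      (lt_two_mul_mul_of_mul_lt (by linarith) hα₂ (by linarith) hpa)
end
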